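/- arXiv:2202.01446 — 4 statements merged into one kernel-verified Lean document; each statement's English description precedes it below -/
import Mathlib

section
/- Let p ∈ (0,1/2), let T ∈ [−1, 0], and let ε ≥ 0 with π₁ = 1/2 + ε ≤ 1 and π₂ = 1/2 − ε. Then π₁·ρ(T) + π₂·ρ(−T) ≤ 0, where ρ(x) = (1−p)·log(1+(1−2p)x) + p·log(1−(1−2p)x). -/
open Real

/-- The paper's `ρ`, with `log` in place of `log₂` (which only rescales it by `log 2 > 0`). -/
noncomputable def rho (p x : ℝ) : ℝ :=
  (1 - p) * log (1 + (1 - 2 * p) * x) + p * log (1 - (1 - 2 * p) * x)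

theorem mix_rho_eq (p ε x : ℝ) :
    (1/2 + ε) * rho p x + (1/2 - ε) * rho p (-x) =
      1/2 * (log (1 + (1 - 2 * p) * x) + log (1 - (1 - 2 * p) * x))
        + ε * (1 - 2 * p) * (log (1 + (1 - 2 * p) * x) - log (1 - (1 - 2 * p) * x)) := by
  simp only [rho, mul_neg, ← sub_eq_add_neg, sub_neg_eq_add]
  ring

theorem log_one_add_add_log_one_sub_nonpos {a : ℝ} (h₁ : -1 < a) (h₂ : a < 1) :
    log (1 + a) + log (1 - a) ≤ 0 := by
  rw [← log_mul (by linarith) (by linarith)]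
  exact log_nonpos (by nlinarith) (by nlinarith [sq_nonneg a])

theorem stmt_6_general (p T ε : ℝ) (hp0 : 0 < p) (hp : p < 1/2)
    (hT1 : -1 ≤ T) (hT0 : T ≤ 0) (hε : 0 ≤ ε) :
    (1/2 + ε) * ((1 - p) * Real.log (1 + (1 - 2*p) * T)
        + p * Real.log (1 - (1 - 2*p) * T))
      + (1/2 - ε) * ((1 - p) * Real.log (1 + (1 - 2*p) * (-T))
        + p * Real.log (1 - (1 - 2*p) * (-T))) ≤ 0 := by
  change (1/2 + ε) * rho p T + (1/2 - ε) * rho p (-T) ≤ 0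
  have hc : 0 ≤ 1 - 2 * p := by linarith
  have ha₀ : (1 - 2 * p) * T ≤ 0 := mul_nonpos_of_nonneg_of_nonpos hc hT0
  have ha₁ : -1 < (1 - 2 * p) * T := by nlinarith
  rw [mix_rho_eq]
  refine add_nonpos (mul_nonpos_of_nonneg_of_nonpos (by norm_num) ?_)
    (mul_nonpos_of_nonneg_of_nonpos (mul_nonneg hε hc) ?_)
  · exact log_one_add_add_log_one_sub_nonpos ha₁ (by linarith)
  · exact sub_nonpos.mpr (log_le_log (by linarith) (by linarith))

/-- For `p ∈ (0,1/2)`, `T ∈ [-1,0]`, `ε ≥ 0` with `π₁ = 1/2 + ε ≤ 1` and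
`π₂ = 1/2 - ε`, we have `π₁ ρ(T) + π₂ ρ(-T) ≤ 0`. -/
theorem stmt_6 (p T ε : ℝ) (hp0 : 0 < p) (hp : p < 1/2)
    (hT1 : -1 ≤ T) (hT0 : T ≤ 0) (hε : 0 ≤ ε) (hπ : 1/2 + ε ≤ 1) :
    (1/2 + ε) * ((1 - p) * Real.log (1 + (1 - 2*p) * T)
        + p * Real.log (1 - (1 - 2*p) * T))
      + (1/2 - ε) * ((1 - p) * Real.log (1 + (1 - 2*p) * (-T))
        + p * Real.log (1 - (1 - 2*p) * (-T))) ≤ 0 :=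
  stmt_6_general p T ε hp0 hp hT1 hT0 hε
end

section
/- For any p ∈ (0,1/2), the inequality (1/2)·log₂(1/(1/2 + √(p(1−p)))) < (1/2)·(1 − H(p)) holds, where H(p) = −p·log₂ p − (1−p)·log₂(1−p). -/
/-!
Put `q = 1 - p`. Strict concavity of `log`, applied at the points `1/√p` and `1/√q` with weights
`p` and `q`, gives `H(p)/2 < log (√p + √q)` (natural logarithms), with strict inequality since
`p ≠ q`. As `(√p + √q)² = 1 + 2√(pq) = 2 g(p)`, this reads `H(p) < log 2 + log g(p)`; dividing by
`2 log 2` gives the claim.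
-/

open Real

lemma sq_sqrt_add_sqrt_one_sub {p : ℝ} (hp0 : 0 ≤ p) (hp1 : p ≤ 1) :
    (√p + √(1 - p)) ^ 2 = 2 * (1 / 2 + √(p * (1 - p))) := by
  rw [add_sq, sq_sqrt hp0, sq_sqrt (by linarith), mul_assoc, ← sqrt_mul hp0]
  ring

lemma binEntropy_lt_two_mul_log_sqrt_add_sqrt {p : ℝ} (hp0 : 0 < p) (hp1 : p < 1)
    (hp : p ≠ 1 / 2) : binEntropy p < 2 * log (√p + √(1 - p)) := by
  have hq0 : 0 < 1 - p := by linarith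
  have hne : (√p)⁻¹ ≠ (√(1 - p))⁻¹ := by
    rw [Ne, inv_inj, sqrt_inj hp0.le hq0.le]
    contrapose! hp
    linarith
  have jensen := strictConcaveOn_log_Ioi.2 (Set.mem_Ioi.2 (inv_pos.2 (sqrt_pos.2 hp0)))
    (Set.mem_Ioi.2 (inv_pos.2 (sqrt_pos.2 hq0))) hne hp0 hq0 (add_sub_cancel p 1)
  have weighted {x : ℝ} (hx : 0 < x) : x • (√x)⁻¹ = √x := by
    rw [smul_eq_mul, ← div_eq_mul_inv, div_sqrt]
  rw [weighted hp0, weighted hq0, smul_eq_mul, smul_eq_mul, log_inv, log_inv,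
    log_sqrt hp0.le, log_sqrt hq0.le] at jensen
  rw [binEntropy, log_inv, log_inv]
  linarith

lemma binEntropy_lt_log_two_add_log {p : ℝ} (hp0 : 0 < p) (hp1 : p < 1) (hp : p ≠ 1 / 2) :
    binEntropy p < log 2 + log (1 / 2 + √(p * (1 - p))) := by
  have hsum : 0 < √p + √(1 - p) := by positivity
  have hsq := congrArg log (sq_sqrt_add_sqrt_one_sub hp0.le hp1.le)
  rw [log_pow, log_mul two_ne_zero (by positivity)] at hsq
  push_cast at hsq
  linarith [binEntropy_lt_two_mul_log_sqrt_add_sqrt hp0 hp1 hp]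

/-- For `p ∈ (0,1/2)`: `(1/2) log₂(1/(1/2 + √(p(1-p)))) < (1/2)(1 - H(p))`. -/
theorem stmt_9 (p : ℝ) (hp0 : 0 < p) (hp : p < 1/2) :
    (1/2) * Real.logb 2 (1 / (1/2 + Real.sqrt (p * (1 - p)))) <
      (1/2) * (1 - (-(p * Real.logb 2 p) - (1 - p) * Real.logb 2 (1 - p))) := by
  have hentropy := binEntropy_lt_log_two_add_log hp0 (by linarith) hp.ne
  rw [binEntropy, log_inv, log_inv] at hentropy
  have hlog2 : 0 < log 2 := log_pos one_lt_two
  simp only [logb, one_div, log_inv]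
  rw [← sub_pos]
  have hexpand : 2⁻¹ * (1 - (-(p * (log p / log 2)) - (1 - p) * (log (1 - p) / log 2))) -
      2⁻¹ * (-log (2⁻¹ + √(p * (1 - p))) / log 2) =
      (log 2 + p * log p + (1 - p) * log (1 - p) + log (2⁻¹ + √(p * (1 - p)))) /
        (2 * log 2) := by
    field_simp
    ring
  rw [hexpand]
  apply div_pos _ (by positivity)
  rw [one_div] at hentropy
  linarith
end

section
/- For any p ∈ [0,1/2], we have log₂(1/(1/2 + √(p(1−p)))) ≤ 1 − H(p), with equality iff p ∈ {0, 1/2}. -/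
open Real

lemma key_strict (p : ℝ) (hp0 : 0 < p) (hp : p < 1/2) :
    Real.logb 2 (1 / (1/2 + Real.sqrt (p * (1 - p)))) <
        1 - (-(p * Real.logb 2 p) - (1 - p) * Real.logb 2 (1 - p)) := by
  have hq0 : 0 < 1 - p := by linarith
  set u := Real.sqrt p with hu_def
  set v := Real.sqrt (1 - p) with hv_def
  have hu : 0 < u := Real.sqrt_pos.2 hp0
  have hv : 0 < v := Real.sqrt_pos.2 hq0
  have hu2 : u ^ 2 = p := Real.sq_sqrt hp0.le
  have hv2 : v ^ 2 = 1 - p := Real.sq_sqrt hq0.le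
  have hne : u ≠ v := by
    intro h
    have : p = 1 - p := by rw [← hv2, ← h, hu2]
    linarith
  have hJ := strictConcaveOn_log_Ioi.2 (Set.mem_Ioi.2 (one_div_pos.2 hu))
      (Set.mem_Ioi.2 (one_div_pos.2 hv))
      (by
        intro h
        rw [one_div, one_div] at h
        exact hne (inv_injective h))
      (show (0:ℝ) < u ^ 2 by positivity) (show (0:ℝ) < v ^ 2 by positivity)
      (by rw [hu2, hv2]; ring)
  simp only [smul_eq_mul] at hJ
  rw [show u ^ 2 * (1 / u) + v ^ 2 * (1 / v) = u + v by field_simp] at hJ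
  rw [Real.log_div one_ne_zero hu.ne', Real.log_div one_ne_zero hv.ne',
    Real.log_one] at hJ
  have hlogu : Real.log u = Real.log p / 2 := Real.log_sqrt hp0.le
  have hlogv : Real.log v = Real.log (1 - p) / 2 := Real.log_sqrt hq0.le
  -- hJ : u^2 * (0 - log u) + v^2 * (0 - log v) < log (u + v)
  have hjensen : -(p * Real.log p) / 2 - (1 - p) * Real.log (1 - p) / 2
      < Real.log (u + v) := by
    rw [hlogu, hlogv, hu2, hv2] at hJ
    linarith [hJ]
  have hsq : Real.sqrt (p * (1 - p)) = u * v := Real.sqrt_mul hp0.le _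
  have huv2 : (u + v) ^ 2 = 2 * (1/2 + u * v) := by linear_combination hu2 + hv2
  have hg : (0:ℝ) < 1/2 + u * v := by positivity
  have hlogg : Real.log (1/2 + u * v) = 2 * Real.log (u + v) - Real.log 2 := by
    have h1 : Real.log ((u + v) ^ 2) = Real.log 2 + Real.log (1/2 + u * v) := by
      rw [huv2, Real.log_mul (by norm_num) hg.ne']
    rw [Real.log_pow] at h1
    push_cast at h1
    linarith
  have h2 : (0:ℝ) < Real.log 2 := Real.log_pos one_lt_two
  have main : Real.log (1 / (1/2 + u * v)) <
      Real.log 2 + p * Real.log p + (1 - p) * Real.log (1 - p) := by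
    rw [Real.log_div one_ne_zero hg.ne', Real.log_one, hlogg]
    linarith
  rw [hsq]
  simp only [Real.logb]
  rw [div_lt_iff₀ h2]
  have hrw : (1 - (-(p * (Real.log p / Real.log 2)) -
      (1 - p) * (Real.log (1 - p) / Real.log 2))) * Real.log 2 =
      Real.log 2 + p * Real.log p + (1 - p) * Real.log (1 - p) := by
    field_simp
    ring
  rw [hrw]
  exact main

/-- For `p ∈ [0,1/2]`: `log₂(1/(1/2 + √(p(1-p)))) ≤ 1 - H(p)`, with equality
iff `p = 0` or `p = 1/2`. -/
theorem stmt_12 (p : ℝ) (hp0 : 0 ≤ p) (hp : p ≤ 1/2) :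
    Real.logb 2 (1 / (1/2 + Real.sqrt (p * (1 - p)))) ≤
        1 - (-(p * Real.logb 2 p) - (1 - p) * Real.logb 2 (1 - p)) ∧
      (Real.logb 2 (1 / (1/2 + Real.sqrt (p * (1 - p)))) =
          1 - (-(p * Real.logb 2 p) - (1 - p) * Real.logb 2 (1 - p))
        ↔ p = 0 ∨ p = 1/2) := by
  rcases hp0.eq_or_lt with h0 | h0
  · subst h0
    have : Real.logb 2 (1 / (1/2 + Real.sqrt ((0:ℝ) * (1 - 0)))) = 1 := by
      norm_num [Real.logb_self_eq_one one_lt_two]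
    rw [this]
    norm_num
  · rcases hp.eq_or_lt with h1 | h1
    · subst h1
      have hs : Real.sqrt ((1/2 : ℝ) * (1 - 1/2)) = 1/2 := by
        rw [show (1/2 : ℝ) * (1 - 1/2) = (1/2)^2 by norm_num,
          Real.sqrt_sq (by norm_num)]
      have hl : Real.logb 2 ((1:ℝ)/2) = -1 := by
        rw [show ((1:ℝ)/2) = (2:ℝ)⁻¹ by norm_num, Real.logb_inv,
          Real.logb_self_eq_one one_lt_two]
      rw [hs]
      norm_num [hl]
    · have hk := key_strict p h0 h1
      refine ⟨hk.le, ?_⟩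
      constructor
      · intro h; exact absurd h hk.ne
      · rintro (rfl | rfl)
        · exact absurd rfl h0.ne'
        · exact absurd rfl h1.ne
end

section
/- Let p ∈ (0,1/2), and let q ∈ (0,1), τ ∈ [−1,1] with 1+(1−2p)τ > 0, q' = q·2p/(1+(1−2p)τ), and suppose 1 − τ − 2q ≥ 0. Then log₂(q'/(1−q')) − log₂(q/(1−q)) ≥ −log₂((1−p)/p). -/
/-!
Writing `D = 1 + (1 - 2p)τ`, the posterior odds after the update are `2pq / (D - 2pq)`, so the
odds are multiplied by `2p(1 - q) / (D - 2pq)`. This factor is at least `p / (1 - p)` because the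
difference of cross products is `pq (1 - 2p)(1 - τ - 2q) ≥ 0`; taking `logb 2` gives the bound.
-/

open Real

lemma div_one_sub_of_eq_div {x a D : ℝ} (hD : D ≠ 0) (hx : x = a / D) :
    x / (1 - x) = a / (D - a) := by
  rw [hx, one_sub_div hD, div_div_div_cancel_right₀ hD]

lemma one_add_mul_sub_mul_pos {p q τ : ℝ} (hp0 : 0 < p) (hp : p < 1 / 2) (hq1 : q < 1)
    (hτ1 : -1 ≤ τ) : 0 < 1 + (1 - 2 * p) * τ - q * (2 * p) := by
  nlinarith [mul_le_mul_of_nonneg_left hτ1 (by linarith : (0 : ℝ) ≤ 1 - 2 * p),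
    mul_pos hp0 (sub_pos.2 hq1)]

lemma div_one_sub_mul_div_one_sub_le {p q τ : ℝ} (hp0 : 0 < p) (hp : p < 1 / 2) (hq0 : 0 < q)
    (hq1 : q < 1) (hpos : 0 < 1 + (1 - 2 * p) * τ - q * (2 * p)) (hmass : 0 ≤ 1 - τ - 2 * q) :
    p / (1 - p) * (q / (1 - q)) ≤ q * (2 * p) / (1 + (1 - 2 * p) * τ - q * (2 * p)) := by
  have hcross : q * (2 * p) * ((1 - p) * (1 - q)) - p * q * (1 + (1 - 2 * p) * τ - q * (2 * p))
      = p * q * ((1 - 2 * p) * (1 - τ - 2 * q)) := by ring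
  have hnonneg : 0 ≤ p * q * ((1 - 2 * p) * (1 - τ - 2 * q)) :=
    mul_nonneg (by positivity) (mul_nonneg (by linarith) hmass)
  rw [div_mul_div_comm, div_le_div_iff₀ (mul_pos (by linarith) (by linarith)) hpos]
  linarith

theorem stmt_16_general (p q q' τ : ℝ) (hp0 : 0 < p) (hp : p < 1/2)
    (hq0 : 0 < q) (hq1 : q < 1) (hτ1 : -1 ≤ τ)
    (hq' : q' = q * (2 * p) / (1 + (1 - 2*p) * τ))
    (hmass : 0 ≤ 1 - τ - 2*q) :
    -(Real.logb 2 ((1 - p) / p)) ≤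
      Real.logb 2 (q' / (1 - q')) - Real.logb 2 (q / (1 - q)) := by
  have hpos := one_add_mul_sub_mul_pos hp0 hp hq1 hτ1
  have hden : 1 + (1 - 2 * p) * τ ≠ 0 := by nlinarith
  have hodds : 0 < q / (1 - q) := div_pos hq0 (by linarith)
  have hprior : 0 < p / (1 - p) := div_pos hp0 (by linarith)
  have hshift : -(logb 2 ((1 - p) / p)) = logb 2 (p / (1 - p)) := by
    rw [← logb_inv, inv_div]
  rw [hshift, div_one_sub_of_eq_div hden hq', le_sub_iff_add_le,
    ← logb_mul hprior.ne' hodds.ne']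
  exact logb_le_logb_of_le one_lt_two (mul_pos hprior hodds)
    (div_one_sub_mul_div_one_sub_le hp0 hp hq0 hq1 hpos hmass)

/-- One unfavorable BZ update decreases the log-likelihood ratio by at most
`log₂((1-p)/p)`, provided the true interval lies right of the query point:
`1 - τ - 2q ≥ 0`. -/
theorem stmt_16 (p q q' τ : ℝ) (hp0 : 0 < p) (hp : p < 1/2)
    (hq0 : 0 < q) (hq1 : q < 1) (hτ1 : -1 ≤ τ) (hτ2 : τ ≤ 1)
    (hden : 0 < 1 + (1 - 2*p) * τ)
    (hq' : q' = q * (2 * p) / (1 + (1 - 2*p) * τ))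
    (hmass : 0 ≤ 1 - τ - 2*q) :
    -(Real.logb 2 ((1 - p) / p)) ≤
      Real.logb 2 (q' / (1 - q')) - Real.logb 2 (q / (1 - q)) :=
  stmt_16_general p q q' τ hp0 hp hq0 hq1 hτ1 hq' hmass
end
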